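/- arXiv:2408.08598 — 3 statements merged into one kernel-verified Lean document; each statement's English description precedes it below -/
import Mathlib

section
/- Let k ≥ 1 and let {(X_1, Y_1), …, (X_k, Y_k)} be the partite-set pairs of k bicliques forming a perfect odd cover of the complete graph K_{2k}. If k is odd, then |X_i| ≡ 1 (mod 4) and |Y_i| ≡ 1 (mod 4) for all 1 ≤ i ≤ k. If k is even, then |X_i| ≡ 3 (mod 4) and |Y_i| ≡ 3 (mod 4) for all 1 ≤ i ≤ k. -/
open Finset

/-- The number of bicliques in the collection `f` that cover the pair `(u, v)`. -/
noncomputable def coversCount {V : Type*} {m : ℕ} (f : Fin m → Finset V × Finset V) (u v : V) : ℕ :=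
  Nat.card {i : Fin m // (u ∈ (f i).1 ∧ v ∈ (f i).2) ∨ (u ∈ (f i).2 ∧ v ∈ (f i).1)}

/-- `f` is an odd cover of `G`: a collection of bicliques (pairs of disjoint finite sets of
vertices) covering each edge of `G` an odd number of times and each nonedge an even number
of times. -/
def IsOddCover {V : Type*} (G : SimpleGraph V) {m : ℕ}
    (f : Fin m → Finset V × Finset V) : Prop :=
  (∀ i, Disjoint (f i).1 (f i).2) ∧
  ∀ u v : V, u ≠ v → (G.Adj u v ↔ Odd (coversCount f u v))

/-- `b2 G` is the minimum cardinality of an odd cover of `G`. -/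
noncomputable def b2 {V : Type*} (G : SimpleGraph V) : ℕ :=
  sInf {m : ℕ | ∃ f : Fin m → Finset V × Finset V, IsOddCover G f}

/-- `r2 G` is the rank over `𝔽₂` of the adjacency matrix of `G`. -/
noncomputable def r2 {V : Type*} [Fintype V] (G : SimpleGraph V) : ℕ :=
  letI := Classical.decRel G.Adj
  (SimpleGraph.adjMatrix (ZMod 2) G).rank

/-- Disjoint union of an indexed family of graphs, on the sigma type of the vertex types. -/
def sigmaSum {ι : Type*} {α : ι → Type*} (G : (i : ι) → SimpleGraph (α i)) :
    SimpleGraph ((i : ι) × α i) where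
  Adj x y := ∃ (i : ι) (a b : α i), (G i).Adj a b ∧ x = ⟨i, a⟩ ∧ y = ⟨i, b⟩
  symm := ⟨by rintro x y ⟨i, a, b, h, rfl, rfl⟩; exact ⟨i, b, a, h.symm, rfl, rfl⟩⟩
  loopless := ⟨by
    rintro x ⟨i, a, b, h, rfl, h2⟩
    obtain ⟨-, h3⟩ := Sigma.mk.inj_iff.mp h2
    exact (G i).irrefl (by cases h3; exact h)⟩

/-!
Work over `𝔽₂` with `M = J - I`, the adjacency matrix of the complete graph on `n = 2k`
vertices, and let `X`, `Y` be the `n × k` incidence matrices of the parts `Xᵢ`, `Yᵢ`. The odd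
cover condition reads `X Yᵀ + Y Xᵀ = M`, and `M² = I` because `n` is even; hence the columns
`xᵢ`, `yᵢ` form a symplectic basis for the form `B(u, w) = uᵀ M w`. In particular
`B(xᵢ, yᵢ) = |Xᵢ| |Yᵢ| = 1`, so all parts have odd size.

`B` is the polar form of `q(u) = ∑_{a < b} u_a u_b`, which on the indicator of a set `S` is
`(|S| choose 2) mod 2`. Expanding a unit vector `e_v` in the symplectic basis and using
`q(e_v) = 0` for every `v` forces `q(xᵢ) = q(yᵢ) = k + 1`. An odd `m` with
`(m choose 2) ≡ k + 1 (mod 2)` satisfies `m ≡ 2k + 3 (mod 4)`.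
-/

open Matrix

namespace QuadraticMap

variable {R W ι : Type*} [CommRing R] [AddCommGroup W] [Module R W] [Fintype ι]

theorem map_sum_of_pairwise_polar_eq_zero (Q : QuadraticMap R W R) (w : ι → W)
    (h : Pairwise fun i j => polar Q (w i) (w j) = 0) :
    Q (∑ i, w i) = ∑ i, Q (w i) := by
  classical
  rw [Q.map_sum, add_eq_left]
  refine Finset.sum_eq_zero fun z hz => ?_
  induction z using Sym2.ind with
  | h i j => exact h (by simpa using (Finset.mem_filter.mp hz).2)

theorem map_sum_smul_add_smul [DecidableEq ι] (Q : QuadraticMap R W R) (x y : ι → W)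
    (hxx : ∀ i j, polar Q (x i) (x j) = 0) (hyy : ∀ i j, polar Q (y i) (y j) = 0)
    (hxy : ∀ i j, polar Q (x i) (y j) = if i = j then 1 else 0) (a b : ι → R) :
    Q (∑ i, (a i • x i + b i • y i)) =
      ∑ i, (a i * a i * Q (x i) + b i * b i * Q (y i) + a i * b i) := by
  rw [map_sum_of_pairwise_polar_eq_zero]
  · refine Finset.sum_congr rfl fun i _ => ?_
    simp [QuadraticMap.map_add, QuadraticMap.map_smul, polar_smul_left, polar_smul_right, hxy]
    ring
  · intro i j hij
    have hyx : polar Q (y i) (x j) = 0 := by rw [polar_comm, hxy, if_neg hij.symm]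
    simp [polar_add_left, polar_add_right, polar_smul_left, polar_smul_right, hxx, hyy, hxy,
      hyx, hij]

end QuadraticMap

namespace Matrix

variable {n ι R : Type*} [Fintype n] [DecidableEq n] [Fintype ι] [DecidableEq ι] [CommRing R]

theorem transpose_mul_mul_eq_of_mul_transpose_add (e : n ≃ ι ⊕ ι) {X Y : Matrix n ι R}
    {M : Matrix n n R} (hM : M * M = 1) (h : X * Yᵀ + Y * Xᵀ = M) :
    Yᵀ * M * X = 1 ∧ Yᵀ * M * Y = 0 ∧ Xᵀ * M * X = 0 ∧ Xᵀ * M * Y = 1 := by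
  have hinv : fromCols X Y * fromRows (Yᵀ * M) (Xᵀ * M) = 1 := by
    rw [fromCols_mul_fromRows, ← Matrix.mul_assoc, ← Matrix.mul_assoc, ← add_mul, h, hM]
  rw [fromCols_mul_fromRows_eq_one_comm e, fromRows_mul_fromCols, ← fromBlocks_one,
    fromBlocks_inj] at hinv
  exact hinv

end Matrix

namespace SimpleGraph

variable {V : Type*} [Fintype V] [DecidableEq V]

theorem adjMatrix_top_mulVec_apply {R : Type*} [Ring R] (u : V → R) (v : V) :
    ((⊤ : SimpleGraph V).adjMatrix R *ᵥ u) v = ∑ w, u w - u v := by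
  rw [adjMatrix_mulVec_apply, neighborFinset_top, eq_sub_iff_add_eq, ← Finset.sum_singleton u v,
    Finset.sum_compl_add_sum]

theorem dotProduct_adjMatrix_top_mulVec {R : Type*} [CommRing R] (x y : V → R) :
    x ⬝ᵥ (⊤ : SimpleGraph V).adjMatrix R *ᵥ y = (∑ v, x v) * (∑ v, y v) - x ⬝ᵥ y := by
  simp_rw [dotProduct, adjMatrix_top_mulVec_apply, mul_sub, Finset.sum_sub_distrib,
    Finset.sum_mul]

theorem transpose_mulVec_adjMatrix_top_mulVec_single {R ι : Type*} [CommRing R]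
    (A : Matrix V ι R) (v : V) (i : ι) :
    (Aᵀ *ᵥ (⊤ : SimpleGraph V).adjMatrix R *ᵥ Pi.single v 1) i = ∑ w, A w i - A v i := by
  rw [mulVec, dotProduct_adjMatrix_top_mulVec, Finset.sum_pi_single', dotProduct_single]
  simp

theorem adjMatrix_top_mul_self_of_even (h : Even (Fintype.card V)) :
    (⊤ : SimpleGraph V).adjMatrix (ZMod 2) * (⊤ : SimpleGraph V).adjMatrix (ZMod 2) = 1 := by
  have hV : (Fintype.card V : ZMod 2) = 0 := (ZMod.natCast_eq_zero_iff_even).mpr h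
  set M := (⊤ : SimpleGraph V).adjMatrix (ZMod 2)
  ext u w
  rw [show (M * M) u w = (M *ᵥ (M *ᵥ Pi.single w 1)) u by
    rw [mulVec_mulVec, mulVec_single_one, col_apply]]
  simp_rw [M, adjMatrix_top_mulVec_apply]
  simp [Finset.sum_sub_distrib, hV, Pi.single_apply, one_apply]

end SimpleGraph

section ESymmTwo

variable (V R : Type*) [Fintype V] [LinearOrder V] [CommRing R]

/-- The second elementary symmetric polynomial of the coordinates, `u ↦ ∑_{a < b} u a * u b`. -/
def esymmTwo : QuadraticForm R (V → R) :=
  Matrix.toQuadraticForm' (Matrix.of fun a b : V => if a < b then (1 : R) else 0)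

variable {V R}

theorem polar_esymmTwo (u w : V → R) :
    QuadraticMap.polar (esymmTwo V R) u w = u ⬝ᵥ (⊤ : SimpleGraph V).adjMatrix R *ᵥ w := by
  rw [esymmTwo, Matrix.toQuadraticForm', LinearMap.BilinMap.polar_toQuadraticMap,
    Matrix.toLinearMap₂'_apply', Matrix.toLinearMap₂'_apply',
    ← dotProduct_transpose_mulVec _ u w, ← dotProduct_add, ← add_mulVec]
  congr 2
  ext a b
  rcases lt_trichotomy a b with h | rfl | h
  · simp [h, h.ne, h.not_gt]
  · simp
  · simp [h, h.ne', h.not_gt]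

theorem polar_esymmTwo_transpose {ι : Type*} (A B : Matrix V ι R) (i j : ι) :
    QuadraticMap.polar (esymmTwo V R) (Aᵀ i) (Bᵀ j) =
      (Aᵀ * (⊤ : SimpleGraph V).adjMatrix R * B) i j := by
  rw [polar_esymmTwo, Matrix.mul_assoc, mul_apply]
  simp [dotProduct, mulVec, mul_apply, Finset.mul_sum]

theorem esymmTwo_indicator (s : Finset V) :
    esymmTwo V R (fun v => if v ∈ s then 1 else 0) = (#s).choose 2 := by
  rw [← Finset.card_product_filter_lt, Finset.natCast_card_filter, Finset.sum_product]
  simp only [esymmTwo, Matrix.toQuadraticForm', LinearMap.BilinMap.toQuadraticMap_apply,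
    Matrix.toLinearMap₂'_apply, Matrix.of_apply]
  simp [Finset.sum_ite_mem, ← Finset.sum_filter, Finset.filter_inter]

end ESymmTwo

namespace PerfectOddCover

variable {V ι : Type*} [Fintype V] [LinearOrder V] [Fintype ι] [DecidableEq ι]
  {X Y : Matrix V ι (ZMod 2)}

local notation "M" => SimpleGraph.adjMatrix (ZMod 2) (⊤ : SimpleGraph V)

theorem transpose_mul_adjMatrix_mul (hcard : Fintype.card V = 2 * Fintype.card ι)
    (hXY : X * Yᵀ + Y * Xᵀ = M) :
    Yᵀ * M * X = 1 ∧ Yᵀ * M * Y = 0 ∧ Xᵀ * M * X = 0 ∧ Xᵀ * M * Y = 1 :=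
  transpose_mul_mul_eq_of_mul_transpose_add
    (Fintype.equivOfCardEq (by rw [hcard, Fintype.card_sum, two_mul]))
    (SimpleGraph.adjMatrix_top_mul_self_of_even ⟨_, hcard.trans (two_mul _)⟩) hXY

theorem sum_col_eq_one (hcard : Fintype.card V = 2 * Fintype.card ι)
    (hXY : X * Yᵀ + Y * Xᵀ = M) (hdisj : X ⊙ Y = 0) (i : ι) :
    ∑ v, X v i = 1 ∧ ∑ v, Y v i = 1 := by
  have h := congrFun (congrFun (transpose_mul_adjMatrix_mul hcard hXY).2.2.2 i) i
  rw [← polar_esymmTwo_transpose, polar_esymmTwo,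
    SimpleGraph.dotProduct_adjMatrix_top_mulVec] at h
  have hxy : Xᵀ i ⬝ᵥ Yᵀ i = 0 := by
    simpa [dotProduct, ← hadamard_apply] using congrArg (fun N => ∑ v, N v i) hdisj
  rw [hxy, sub_zero, one_apply_eq] at h
  simpa using h

theorem sum_row_add_eq_one (hcard : Fintype.card V = 2 * Fintype.card ι)
    (hXY : X * Yᵀ + Y * Xᵀ = M) (hdisj : X ⊙ Y = 0) (v : V) :
    ∑ i, (X v i + Y v i) = 1 := by
  have h := congrFun (congrArg (· *ᵥ fun _ => (1 : ZMod 2)) hXY) v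
  have hX : Xᵀ *ᵥ (fun _ => 1) = fun _ => 1 := funext fun i => by
    simpa [mulVec, dotProduct] using (sum_col_eq_one hcard hXY hdisj i).1
  have hY : Yᵀ *ᵥ (fun _ => 1) = fun _ => 1 := funext fun i => by
    simpa [mulVec, dotProduct] using (sum_col_eq_one hcard hXY hdisj i).2
  simp only [add_mulVec, ← mulVec_mulVec, hX, hY, SimpleGraph.adjMatrix_top_mulVec_apply] at h
  simp [mulVec, dotProduct, hcard] at h
  rw [Finset.sum_add_distrib, h, show (2 : ZMod 2) = 0 from rfl, zero_mul, zero_sub]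
  rfl

theorem esymmTwo_eq_sum (hcard : Fintype.card V = 2 * Fintype.card ι)
    (hXY : X * Yᵀ + Y * Xᵀ = M) (u : V → ZMod 2) :
    esymmTwo V (ZMod 2) u =
      ∑ i, ((Yᵀ *ᵥ M *ᵥ u) i * esymmTwo V (ZMod 2) (Xᵀ i) +
        (Xᵀ *ᵥ M *ᵥ u) i * esymmTwo V (ZMod 2) (Yᵀ i) + (Yᵀ *ᵥ M *ᵥ u) i * (Xᵀ *ᵥ M *ᵥ u) i) := by
  obtain ⟨hYX, hYY, hXX, hXY'⟩ := transpose_mul_adjMatrix_mul hcard hXY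
  have hu : u = ∑ i, ((Yᵀ *ᵥ M *ᵥ u) i • Xᵀ i + (Xᵀ *ᵥ M *ᵥ u) i • Yᵀ i) := by
    have h1 : ((X * Yᵀ + Y * Xᵀ) * M) *ᵥ u = u := by
      rw [hXY, SimpleGraph.adjMatrix_top_mul_self_of_even ⟨_, hcard.trans (two_mul _)⟩,
        one_mulVec]
    have hcols : ∀ (A : Matrix V ι (ZMod 2)) a, A *ᵥ a = ∑ i, a i • Aᵀ i := fun A a => by
      simp_rw [mulVec_eq_sum, op_smul_eq_smul]
    calc u = ((X * Yᵀ + Y * Xᵀ) * M) *ᵥ u := h1.symm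
      _ = X *ᵥ (Yᵀ *ᵥ M *ᵥ u) + Y *ᵥ (Xᵀ *ᵥ M *ᵥ u) := by
        simp only [add_mul, add_mulVec, mulVec_mulVec, Matrix.mul_assoc]
      _ = _ := by rw [hcols X, hcols Y, ← Finset.sum_add_distrib]
  have hsq : ∀ c : ZMod 2, c * c = c := by decide
  conv_lhs => rw [hu]
  rw [QuadraticMap.map_sum_smul_add_smul (esymmTwo V (ZMod 2)) (fun i => Xᵀ i)
    (fun i => Yᵀ i)]
  · simp only [hsq]
  · intro i j
    rw [polar_esymmTwo_transpose, hXX, Matrix.zero_apply]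
  · intro i j
    rw [polar_esymmTwo_transpose, hYY, Matrix.zero_apply]
  · intro i j
    rw [polar_esymmTwo_transpose, hXY', one_apply]

theorem adjMatrix_mulVec_esymmTwo_eq_const (hcard : Fintype.card V = 2 * Fintype.card ι)
    (hXY : X * Yᵀ + Y * Xᵀ = M) (hdisj : X ⊙ Y = 0) :
    M *ᵥ (Y *ᵥ (fun i => esymmTwo V (ZMod 2) (Xᵀ i)) +
      X *ᵥ (fun i => esymmTwo V (ZMod 2) (Yᵀ i))) = fun _ => 1 + (Fintype.card ι : ZMod 2) := by
  have hcol := sum_col_eq_one hcard hXY hdisj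
  funext v
  have he : esymmTwo V (ZMod 2) (Pi.single v 1) = 0 := by
    rw [show (Pi.single v 1 : V → ZMod 2) = fun w => if w ∈ ({v} : Finset V) then 1 else 0 by
      ext w; simp [Pi.single_apply], esymmTwo_indicator]
    simp
  have hpair : ∑ i, (1 - Y v i) * (1 - X v i) = Fintype.card ι - 1 := by
    have hXYv : ∀ i, (1 - Y v i) * (1 - X v i) = 1 - (X v i + Y v i) := fun i => by
      have h0 : X v i * Y v i = 0 := congrFun (congrFun hdisj v) i
      linear_combination h0
    simp [hXYv, Finset.sum_sub_distrib, sum_row_add_eq_one hcard hXY hdisj v]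
  -- In the symplectic basis, `e_v` has coordinates `1 - Y v i` and `1 - X v i`.
  have h := esymmTwo_eq_sum hcard hXY (Pi.single v 1)
  simp only [he, SimpleGraph.transpose_mulVec_adjMatrix_top_mulVec_single, hcol,
    Finset.sum_add_distrib] at h
  rw [hpair] at h
  simp only [sub_mul, one_mul, Finset.sum_sub_distrib] at h
  have hsum : ∀ (A : Matrix V ι (ZMod 2)) (q : ι → ZMod 2), (∀ i, ∑ w, A w i = 1) →
      ∑ w, (A *ᵥ q) w = ∑ i, q i := fun A q hA => by
    simp [mulVec, dotProduct, Finset.sum_comm (γ := V), ← Finset.sum_mul, hA]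
  simp only [SimpleGraph.adjMatrix_top_mulVec_apply, Pi.add_apply, Finset.sum_add_distrib]
  rw [hsum _ _ fun i => (hcol i).2, hsum _ _ fun i => (hcol i).1]
  simp only [mulVec, dotProduct]
  have h2 : (2 : ZMod 2) = 0 := rfl
  linear_combination -h - (Fintype.card ι : ZMod 2) * h2

theorem esymmTwo_transpose_apply (hcard : Fintype.card V = 2 * Fintype.card ι)
    (hXY : X * Yᵀ + Y * Xᵀ = M) (hdisj : X ⊙ Y = 0) (j : ι) :
    esymmTwo V (ZMod 2) (Xᵀ j) = 1 + Fintype.card ι ∧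
      esymmTwo V (ZMod 2) (Yᵀ j) = 1 + Fintype.card ι := by
  obtain ⟨hYX, hYY, hXX, hXY'⟩ := transpose_mul_adjMatrix_mul hcard hXY
  have hz := adjMatrix_mulVec_esymmTwo_eq_const hcard hXY hdisj
  have hx : Xᵀ *ᵥ (fun _ => 1 + (Fintype.card ι : ZMod 2)) =
      fun i => esymmTwo V (ZMod 2) (Xᵀ i) := by
    rw [← hz, mulVec_mulVec, mulVec_add, mulVec_mulVec, mulVec_mulVec, hXY', hXX, one_mulVec,
      zero_mulVec, add_zero]
  have hy : Yᵀ *ᵥ (fun _ => 1 + (Fintype.card ι : ZMod 2)) =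
      fun i => esymmTwo V (ZMod 2) (Yᵀ i) := by
    rw [← hz, mulVec_mulVec, mulVec_add, mulVec_mulVec, mulVec_mulVec, hYY, hYX, one_mulVec,
      zero_mulVec, zero_add]
  have hcol := sum_col_eq_one hcard hXY hdisj j
  constructor
  · simpa [mulVec, dotProduct, ← Finset.sum_mul, hcol] using (congrFun hx j).symm
  · simpa [mulVec, dotProduct, ← Finset.sum_mul, hcol] using (congrFun hy j).symm

end PerfectOddCover

def incidence {V ι : Type*} [DecidableEq V] (s : ι → Finset V) : Matrix V ι (ZMod 2) :=
  Matrix.of fun v i => if v ∈ s i then 1 else 0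

theorem transpose_incidence_apply {V ι : Type*} [DecidableEq V] (s : ι → Finset V) (i : ι) :
    (incidence s)ᵀ i = fun v => if v ∈ s i then 1 else 0 :=
  rfl

theorem sum_incidence_apply {V ι : Type*} [Fintype V] [DecidableEq V] (s : ι → Finset V)
    (i : ι) :
    ∑ v, incidence s v i = #(s i) := by
  simp [incidence]

section OddCover

variable {V : Type*} [DecidableEq V] {m : ℕ} {f : Fin m → Finset V × Finset V}

theorem natCast_coversCount (hd : ∀ i, Disjoint (f i).1 (f i).2) (u v : V) :
    (coversCount f u v : ZMod 2) =
      (incidence (Prod.fst ∘ f) * (incidence (Prod.snd ∘ f))ᵀ +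
        incidence (Prod.snd ∘ f) * (incidence (Prod.fst ∘ f))ᵀ) u v := by
  rw [coversCount, Nat.card_eq_fintype_card, Fintype.card_subtype, Finset.natCast_card_filter,
    Matrix.add_apply, mul_apply, mul_apply, ← Finset.sum_add_distrib]
  refine Finset.sum_congr rfl fun i _ => ?_
  have := Finset.disjoint_left.mp (hd i)
  by_cases hu₁ : u ∈ (f i).1 <;> by_cases hu₂ : u ∈ (f i).2 <;> by_cases hv₁ : v ∈ (f i).1 <;>
    by_cases hv₂ : v ∈ (f i).2 <;> simp_all [incidence]

theorem IsOddCover.mul_transpose_add_eq_adjMatrix {G : SimpleGraph V} [DecidableRel G.Adj]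
    (hf : IsOddCover G f) :
    incidence (Prod.fst ∘ f) * (incidence (Prod.snd ∘ f))ᵀ +
      incidence (Prod.snd ∘ f) * (incidence (Prod.fst ∘ f))ᵀ = G.adjMatrix (ZMod 2) := by
  ext u v
  by_cases huv : u = v
  · subst huv
    rw [← transpose_transpose (incidence (Prod.snd ∘ f)), ← transpose_mul, transpose_transpose,
      Matrix.add_apply, transpose_apply, CharTwo.add_self_eq_zero]
    simp
  · rw [← natCast_coversCount hf.1, SimpleGraph.adjMatrix_apply]
    split_ifs with h
    · exact ZMod.natCast_eq_one_iff_odd.mpr ((hf.2 u v huv).mp h)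
    · exact ZMod.natCast_eq_zero_iff_even.mpr
        (Nat.not_odd_iff_even.mp (mt (hf.2 u v huv).mpr h))

end OddCover

theorem Nat.mod_four_eq_of_choose_two {n k : ℕ} (hn : (n : ZMod 2) = 1)
    (h : (n.choose 2 : ZMod 2) = 1 + k) : n % 4 = (2 * k + 3) % 4 := by
  obtain ⟨m, rfl⟩ := ZMod.natCast_eq_one_iff_odd.mp hn
  have hchoose : (2 * m + 1).choose 2 = m * (2 * m + 1) := by
    rw [Nat.choose_two_right, Nat.add_sub_cancel]
    exact Nat.div_eq_of_eq_mul_left two_pos (by ring)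
  have h2 : (2 : ZMod 2) = 0 := rfl
  have hm : ((m : ℕ) : ZMod 2) = ((1 + k : ℕ) : ZMod 2) := by
    rw [hchoose] at h
    push_cast at h ⊢
    linear_combination h - (m * m : ZMod 2) * h2
  have := (ZMod.natCast_eq_natCast_iff' _ _ 2).mp hm
  omega

theorem IsOddCover.card_mod_four {V : Type*} [Fintype V] [LinearOrder V] {k : ℕ}
    {f : Fin k → Finset V × Finset V} (hf : IsOddCover ⊤ f) (hcard : Fintype.card V = 2 * k)
    (i : Fin k) : #(f i).1 % 4 = (2 * k + 3) % 4 ∧ #(f i).2 % 4 = (2 * k + 3) % 4 := by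
  have hcard' : Fintype.card V = 2 * Fintype.card (Fin k) := by rw [hcard, Fintype.card_fin]
  have hXY := hf.mul_transpose_add_eq_adjMatrix
  have hdisj : incidence (Prod.fst ∘ f) ⊙ incidence (Prod.snd ∘ f) = 0 := by
    ext v j
    have hv : v ∈ (f j).1 → v ∉ (f j).2 := fun h => Finset.disjoint_left.mp (hf.1 j) h
    by_cases v ∈ (f j).1 <;> simp_all [incidence]
  have hodd := PerfectOddCover.sum_col_eq_one hcard' hXY hdisj i
  have hpairs := PerfectOddCover.esymmTwo_transpose_apply hcard' hXY hdisj i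
  simp only [sum_incidence_apply, transpose_incidence_apply, esymmTwo_indicator,
    Fintype.card_fin, Function.comp_apply] at hodd hpairs
  exact ⟨Nat.mod_four_eq_of_choose_two hodd.1 hpairs.1,
    Nat.mod_four_eq_of_choose_two hodd.2 hpairs.2⟩

theorem stmt15_general (k : ℕ)
    (f : Fin k → Finset (Fin (2 * k)) × Finset (Fin (2 * k)))
    (hf : IsOddCover (⊤ : SimpleGraph (Fin (2 * k))) f) :
    (Odd k → ∀ i, (f i).1.card % 4 = 1 ∧ (f i).2.card % 4 = 1) ∧
    (Even k → ∀ i, (f i).1.card % 4 = 3 ∧ (f i).2.card % 4 = 3) := by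
  have h := hf.card_mod_four (Fintype.card_fin _)
  refine ⟨fun ⟨j, hj⟩ i => ?_, fun ⟨j, hj⟩ i => ?_⟩ <;> have := h i <;> omega

/-- In a perfect odd cover `(X₁,Y₁),…,(X_k,Y_k)` of `K_{2k}`: if `k` is odd
then `|Xᵢ| ≡ |Yᵢ| ≡ 1 (mod 4)` for all `i`, and if `k` is even then
`|Xᵢ| ≡ |Yᵢ| ≡ 3 (mod 4)` for all `i`. -/
theorem stmt15 (k : ℕ) (hk : 1 ≤ k)
    (f : Fin k → Finset (Fin (2 * k)) × Finset (Fin (2 * k)))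
    (hf : IsOddCover (⊤ : SimpleGraph (Fin (2 * k))) f) :
    (Odd k → ∀ i, (f i).1.card % 4 = 1 ∧ (f i).2.card % 4 = 1) ∧
    (Even k → ∀ i, (f i).1.card % 4 = 3 ∧ (f i).2.card % 4 = 3) :=
  stmt15_general k f hf
end

section
/- Let k ≥ 1 and let {(X_1, Y_1), …, (X_k, Y_k)} be the partite-set pairs of k bicliques forming a perfect odd cover of the complete graph K_{2k}. Then for all i, j ∈ {1, …, k} with i ≠ j, the cardinalities |X_i ∩ X_j|, |X_i ∩ Y_j|, and |Y_i ∩ Y_j| are all odd. -/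
/-!
Let `P` be the `𝔽₂`-incidence matrix of the parts `X₁, …, X_k, Y₁, …, Y_k` and `Q` the one with
`Xᵢ` and `Yᵢ` exchanged. The odd-cover condition is `P Qᵀ = A`, the adjacency matrix `J - I` of
`K_{2k}`, and `A² = I` because `2k` is even. Since `P` is square, `P (Qᵀ A) = I` forces
`Qᵀ A P = I`; entrywise, `|S| |T| + |S ∩ T| ≡ 1` if `S, T` are the two sides of one biclique and
`≡ 0` otherwise. Sides of one biclique are disjoint, so every part has odd size, and then parts of
different bicliques meet in an odd number of vertices.
-/


open Finset

open Matrix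

section IncidenceMatrix

variable {V ι κ : Type*} [DecidableEq V] (R : Type*)

def incidenceMatrix [Zero R] [One R] (S : ι → Finset V) : Matrix V ι R :=
  of fun v a => if v ∈ S a then 1 else 0

variable [Semiring R]

theorem incidenceMatrix_transpose_mul [Fintype V] (S : ι → Finset V) (T : κ → Finset V) :
    (incidenceMatrix R S)ᵀ * incidenceMatrix R T = of fun a b => ((S a ∩ T b).card : R) := by
  ext a b
  simp [incidenceMatrix, mul_apply, ← ite_and, Finset.sum_boole, Finset.filter_and,
    Finset.inter_comm]

theorem incidenceMatrix_mul_transpose [Fintype V] [Fintype ι] (S T : ι → Finset V) :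
    incidenceMatrix R S * (incidenceMatrix R T)ᵀ =
      of fun u v => (({a | u ∈ S a ∧ v ∈ T a} : Finset ι).card : R) := by
  ext u v
  simp [incidenceMatrix, mul_apply, ← ite_and, Finset.sum_boole, and_comm]

theorem incidenceMatrix_transpose_mul_ones_mul [Fintype V] (S : ι → Finset V)
    (T : κ → Finset V) :
    (incidenceMatrix R S)ᵀ * (of 1 : Matrix V V R) * incidenceMatrix R T =
      of fun a b => ((S a).card * (T b).card : R) := by
  ext a b
  simpa [incidenceMatrix, mul_apply] using Nat.cast_comm _ _

end IncidenceMatrix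

theorem adjMatrix_top_mul_self_eq_one {V : Type*} [Fintype V] [DecidableEq V]
    (hV : Even (Fintype.card V)) :
    (⊤ : SimpleGraph V).adjMatrix (ZMod 2) * (⊤ : SimpleGraph V).adjMatrix (ZMod 2) = 1 := by
  have hJ : (of 1 : Matrix V V (ZMod 2)) * of 1 = 0 := by
    ext u v
    simpa [mul_apply] using hV.natCast_zmod_two
  have hA : (⊤ : SimpleGraph V).adjMatrix (ZMod 2) = of 1 - 1 :=
    SimpleGraph.adjMatrix_completeGraph_eq_of_one_sub_one _ _
  simp [hA, ZModModule.sub_eq_add, add_mul, mul_add, hJ, ← add_assoc, ZModModule.add_self]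

section BicliqueParts

variable {V : Type*} {m : ℕ} (f : Fin m → Finset V × Finset V)

def bicliqueParts : Fin m ⊕ Fin m → Finset V :=
  Sum.elim (fun i => (f i).1) (fun i => (f i).2)

variable {f}

theorem disjoint_bicliqueParts_swap (hdisj : ∀ i, Disjoint (f i).1 (f i).2)
    (a : Fin m ⊕ Fin m) : Disjoint (bicliqueParts f a) (bicliqueParts f a.swap) := by
  cases a with
  | inl i => exact hdisj i
  | inr i => exact (hdisj i).symm

theorem coversCount_self_eq_zero (hdisj : ∀ i, Disjoint (f i).1 (f i).2) (u : V) :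
    coversCount f u u = 0 := by
  rw [coversCount, Nat.card_eq_zero]
  left
  constructor
  rintro ⟨i, ⟨hX, hY⟩ | ⟨hY, hX⟩⟩ <;> exact Finset.disjoint_left.1 (hdisj i) hX hY

theorem coversCount_eq_card_filter_bicliqueParts [DecidableEq V]
    (hdisj : ∀ i, Disjoint (f i).1 (f i).2) (u v : V) :
    coversCount f u v =
      ({a | u ∈ bicliqueParts f a ∧ v ∈ bicliqueParts f a.swap} : Finset _).card := by
  rw [coversCount, Nat.card_eq_fintype_card, Fintype.card_subtype, Finset.filter_or,
    Finset.card_union_of_disjoint]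
  · simp only [Finset.card_filter, Fintype.sum_sum_type]
    rfl
  · exact Finset.disjoint_filter.2 fun i _ h h' => Finset.disjoint_left.1 (hdisj i) h.1 h'.1

end BicliqueParts

namespace IsOddCover

variable {V : Type*} [Fintype V] [DecidableEq V] {m : ℕ} {f : Fin m → Finset V × Finset V}

theorem incidenceMatrix_mul_transpose_eq_adjMatrix {G : SimpleGraph V} [DecidableRel G.Adj]
    (hf : IsOddCover G f) :
    incidenceMatrix (ZMod 2) (bicliqueParts f) *
        (incidenceMatrix (ZMod 2) (bicliqueParts f ∘ Sum.swap))ᵀ = G.adjMatrix (ZMod 2) := by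
  ext u v
  rw [incidenceMatrix_mul_transpose, of_apply, SimpleGraph.adjMatrix_apply, Function.comp_def,
    ← coversCount_eq_card_filter_bicliqueParts hf.1]
  by_cases huv : u = v
  · subst huv
    simp [coversCount_self_eq_zero hf.1]
  · split_ifs with hG
    · exact ZMod.natCast_eq_one_iff_odd.2 ((hf.2 u v huv).1 hG)
    · exact ZMod.natCast_eq_zero_iff_even.2 (Nat.not_odd_iff_even.1 (mt (hf.2 u v huv).2 hG))

variable (hf : IsOddCover (⊤ : SimpleGraph V) f) (hV : Fintype.card V = 2 * m)
include hf hV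

theorem card_mul_card_add_card_inter (a b : Fin m ⊕ Fin m) :
    ((bicliqueParts f a.swap).card * (bicliqueParts f b).card +
        (bicliqueParts f a.swap ∩ bicliqueParts f b).card : ZMod 2) =
      if a = b then 1 else 0 := by
  set P := incidenceMatrix (ZMod 2) (bicliqueParts f)
  set Q := incidenceMatrix (ZMod 2) (bicliqueParts f ∘ Sum.swap)
  have hA : (⊤ : SimpleGraph V).adjMatrix (ZMod 2) = of 1 - 1 :=
    SimpleGraph.adjMatrix_completeGraph_eq_of_one_sub_one _ _
  have hright : P * (Qᵀ * (⊤ : SimpleGraph V).adjMatrix (ZMod 2)) = 1 := by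
    rw [← Matrix.mul_assoc, hf.incidenceMatrix_mul_transpose_eq_adjMatrix,
      adjMatrix_top_mul_self_eq_one (by simp [hV])]
  have hleft :=
    (mul_eq_one_comm_of_card_eq V _ (ZMod 2) (by simp [hV, two_mul])).1 hright
  rw [hA, Matrix.mul_sub, Matrix.mul_one, Matrix.sub_mul, incidenceMatrix_transpose_mul,
    incidenceMatrix_transpose_mul_ones_mul] at hleft
  simpa [ZModModule.sub_eq_add, one_apply] using congrFun₂ hleft a b

theorem odd_card_bicliqueParts (a : Fin m ⊕ Fin m) : Odd (bicliqueParts f a).card := by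
  have h := hf.card_mul_card_add_card_inter hV a.swap a.swap
  rw [Sum.swap_swap, Finset.disjoint_iff_inter_eq_empty.1 (disjoint_bicliqueParts_swap hf.1 a),
    Finset.card_empty, Nat.cast_zero, add_zero, if_pos rfl, ← Nat.cast_mul,
    ZMod.natCast_eq_one_iff_odd] at h
  exact (Nat.odd_mul.1 h).1

theorem odd_card_bicliqueParts_inter {a b : Fin m ⊕ Fin m} (hab : a.swap ≠ b) :
    Odd (bicliqueParts f a ∩ bicliqueParts f b).card := by
  have h := hf.card_mul_card_add_card_inter hV a.swap b
  rw [Sum.swap_swap, if_neg hab,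
    ZMod.natCast_eq_one_iff_odd.2 (hf.odd_card_bicliqueParts hV a),
    ZMod.natCast_eq_one_iff_odd.2 (hf.odd_card_bicliqueParts hV b), one_mul] at h
  rw [← ZMod.natCast_eq_one_iff_odd]
  simpa [ZModModule.neg_eq_self] using eq_neg_of_add_eq_zero_right h

end IsOddCover

theorem stmt16_general (k : ℕ)
    (f : Fin k → Finset (Fin (2 * k)) × Finset (Fin (2 * k)))
    (hf : IsOddCover (⊤ : SimpleGraph (Fin (2 * k))) f) :
    ∀ i j : Fin k, i ≠ j →
      Odd ((f i).1 ∩ (f j).1).card ∧ Odd ((f i).1 ∩ (f j).2).card ∧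
        Odd ((f i).2 ∩ (f j).2).card := by
  intro i j hij
  have hV : Fintype.card (Fin (2 * k)) = 2 * k := Fintype.card_fin _
  exact ⟨hf.odd_card_bicliqueParts_inter hV (a := .inl i) (b := .inl j) (by simp),
    hf.odd_card_bicliqueParts_inter hV (a := .inl i) (b := .inr j) (by simpa using hij),
    hf.odd_card_bicliqueParts_inter hV (a := .inr i) (b := .inr j) (by simp)⟩

/-- In a perfect odd cover `(X₁,Y₁),…,(X_k,Y_k)` of `K_{2k}`, for all
`i ≠ j`, the cardinalities `|Xᵢ ∩ Xⱼ|`, `|Xᵢ ∩ Yⱼ|` and `|Yᵢ ∩ Yⱼ|` are all odd. -/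
theorem stmt16 (k : ℕ) (hk : 1 ≤ k)
    (f : Fin k → Finset (Fin (2 * k)) × Finset (Fin (2 * k)))
    (hf : IsOddCover (⊤ : SimpleGraph (Fin (2 * k))) f) :
    ∀ i j : Fin k, i ≠ j →
      Odd ((f i).1 ∩ (f j).1).card ∧ Odd ((f i).1 ∩ (f j).2).card ∧
        Odd ((f i).2 ∩ (f j).2).card :=
  stmt16_general k f hf
end

section
/- Let k ≥ 1 and let {(X_1, Y_1), …, (X_k, Y_k)} be the partite-set pairs of k bicliques forming a perfect odd cover of the complete graph K_{2k}. Then for any integer s with s ≡ 2 or 3 (mod 4) and any subset A of the vertex set of K_{2k} with |A| = s, there exists an index i ∈ {1, …, k} such that |A ∩ X_i| and |A ∩ Y_i| are both odd. -/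
open Finset

/-!
Count the pairs `{u, v} ⊆ A` with multiplicity over the bicliques. Each pair is an edge of the
complete graph, hence covered an odd number of times, and there are `C(|A|, 2)` of them, an odd
number when `|A| ≡ 2, 3 (mod 4)`; so the total count is odd. On the other hand the biclique
`(X, Y)` covers exactly `|A ∩ X| · |A ∩ Y|` of these pairs, so one of these products is odd.
-/

variable {V : Type*}

def CoversPair (b : Finset V × Finset V) (u v : V) : Prop :=
  (u ∈ b.1 ∧ v ∈ b.2) ∨ (u ∈ b.2 ∧ v ∈ b.1)

instance [DecidableEq V] (b : Finset V × Finset V) (u v : V) : Decidable (CoversPair b u v) := by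
  unfold CoversPair; infer_instance

theorem coversCount_eq_card [DecidableEq V] {m : ℕ} (f : Fin m → Finset V × Finset V) (u v : V) :
    coversCount f u v = #{i | CoversPair (f i) u v} := by
  rw [coversCount, Nat.card_eq_fintype_card, Fintype.card_subtype]
  rfl

section LinearOrder

variable [LinearOrder V]

theorem card_filter_lt_offDiag (A : Finset V) :
    #{p ∈ A.offDiag | p.1 < p.2} = (#A).choose 2 := by
  rw [← Sym2.card_image_offDiag]
  refine (card_image_of_injOn (f := Sym2.mk.uncurry) ?_).symm.trans (congrArg card ?_)
  · rintro ⟨a, b⟩ hab ⟨c, d⟩ hcd h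
    simp only [coe_filter, Function.uncurry_apply_pair, Sym2.eq_iff] at hab hcd h
    grind
  · ext e
    induction e using Sym2.ind
    simp only [mem_image, Prod.exists, Function.uncurry_apply_pair, Sym2.eq_iff]
    grind

theorem card_filter_lt_offDiag_coversPair (A : Finset V) {X Y : Finset V} (hXY : Disjoint X Y) :
    #{p ∈ A.offDiag | p.1 < p.2 ∧ CoversPair (X, Y) p.1 p.2} = #(A ∩ X) * #(A ∩ Y) := by
  rw [← card_product]
  symm
  apply card_bij' (fun p _ => (min p.1 p.2, max p.1 p.2))
    (fun p _ => if p.1 ∈ X then p else p.swap) <;>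
    grind [CoversPair, disjoint_left]

theorem sum_coversCount_filter_lt_offDiag {m : ℕ} {f : Fin m → Finset V × Finset V}
    (hf : ∀ i, Disjoint (f i).1 (f i).2) (A : Finset V) :
    ∑ p ∈ A.offDiag with p.1 < p.2, coversCount f p.1 p.2 =
      ∑ i, #(A ∩ (f i).1) * #(A ∩ (f i).2) := by
  simp only [coversCount_eq_card, card_filter]
  rw [sum_comm]
  refine sum_congr rfl fun i _ => ?_
  rw [← card_filter, ← card_filter_lt_offDiag_coversPair A (hf i), filter_filter]

end LinearOrder

theorem odd_choose_two_of_mod_four {s : ℕ} (hs : s % 4 = 2 ∨ s % 4 = 3) : Odd (s.choose 2) := by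
  rw [Nat.choose_two_right]
  obtain ⟨q, rfl | rfl⟩ : ∃ q, s = 4 * q + 2 ∨ s = 4 * q + 3 := ⟨s / 4, by omega⟩
  · rw [Nat.div_eq_of_eq_mul_left two_pos (k := (2 * q + 1) * (4 * q + 1))
      (by rw [show 4 * q + 2 - 1 = 4 * q + 1 by omega]; ring)]
    exact Odd.mul ⟨q, rfl⟩ ⟨2 * q, by ring⟩
  · rw [Nat.div_eq_of_eq_mul_left two_pos (k := (4 * q + 3) * (2 * q + 1))
      (by rw [show 4 * q + 3 - 1 = 4 * q + 2 by omega]; ring)]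
    exact Odd.mul ⟨2 * q + 1, by ring⟩ ⟨q, rfl⟩

theorem IsOddCover.exists_odd_card_inter [DecidableEq V] {m : ℕ}
    {f : Fin m → Finset V × Finset V} (hf : IsOddCover (⊤ : SimpleGraph V) f) (A : Finset V)
    (hA : Odd ((#A).choose 2)) : ∃ i, Odd #(A ∩ (f i).1) ∧ Odd #(A ∩ (f i).2) := by
  -- Any linear order does: it only serves to count each pair `{u, v}` once, as `u < v`.
  -- Its decidable equality differs from the given one, hence the final `convert`.
  let _ : LinearOrder V := IsWellOrder.linearOrder WellOrderingRel
  have hodd : Odd (∑ p ∈ A.offDiag with p.1 < p.2, coversCount f p.1 p.2) := by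
    rw [odd_sum_iff_odd_card_odd, filter_true_of_mem, card_filter_lt_offDiag]
    · exact hA
    · intro p hp
      rw [mem_filter, mem_offDiag] at hp
      exact (hf.2 p.1 p.2 hp.1.2.2).1 hp.1.2.2
  rw [sum_coversCount_filter_lt_offDiag hf.1, odd_sum_iff_odd_card_odd] at hodd
  obtain ⟨i, hi⟩ := card_pos.mp hodd.pos
  refine ⟨i, ?_⟩
  convert Nat.odd_mul.mp (mem_filter.mp hi).2

theorem stmt18_general (k : ℕ)
    (f : Fin k → Finset (Fin (2 * k)) × Finset (Fin (2 * k)))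
    (hf : IsOddCover (⊤ : SimpleGraph (Fin (2 * k))) f)
    (s : ℕ) (hs : s % 4 = 2 ∨ s % 4 = 3)
    (A : Finset (Fin (2 * k))) (hA : A.card = s) :
    ∃ i : Fin k, Odd ((A ∩ (f i).1).card) ∧ Odd ((A ∩ (f i).2).card) :=
  hf.exists_odd_card_inter A (hA ▸ odd_choose_two_of_mod_four hs)

/-- In a perfect odd cover `(X₁,Y₁),…,(X_k,Y_k)` of `K_{2k}`, for any
integer `s ≡ 2 or 3 (mod 4)` and any vertex subset `A` with `|A| = s`, some biclique has
`|A ∩ Xᵢ|` and `|A ∩ Yᵢ|` both odd. -/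
theorem stmt18 (k : ℕ) (hk : 1 ≤ k)
    (f : Fin k → Finset (Fin (2 * k)) × Finset (Fin (2 * k)))
    (hf : IsOddCover (⊤ : SimpleGraph (Fin (2 * k))) f)
    (s : ℕ) (hs : s % 4 = 2 ∨ s % 4 = 3)
    (A : Finset (Fin (2 * k))) (hA : A.card = s) :
    ∃ i : Fin k, Odd ((A ∩ (f i).1).card) ∧ Odd ((A ∩ (f i).2).card) :=
  stmt18_general k f hf s hs A hA
end
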